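/- arXiv:2002.01251 — 3 statements merged into one kernel-verified Lean document; each statement's English description precedes it below -/
import Mathlib

section
/- In a preference game with local aggregation where d is a metric and the aggregation function satisfies unanimity, if α ≤ 1/2 then any consensus state e = (z, z, …, z) with z ∈ Z is a pure Nash equilibrium. -/
noncomputable def prefCost {U : Type*} [MetricSpace U] {ι : Type*} (α : ℝ)
    (s : ι → U) (aggr : ι → (ι → U) → U) (i : ι) (z : ι → U) : ℝ :=
  α * dist (s i) (z i) + (1 - α) * dist (z i) (aggr i z)

/-! By unanimity the aggregate seen by `i` is `z` both at the consensus and after `i` deviates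
alone to `y`, so the claim reduces to `α d(s, z) ≤ α d(s, y) + (1 - α) d(y, z)`: the triangle
inequality, weighted by `|α| ≤ 1 - α`. -/

theorem mul_dist_le_mul_dist_add_one_sub_mul_dist {U : Type*} [PseudoMetricSpace U] {α : ℝ}
    (hα : α ≤ 1 / 2) (a b c : U) :
    α * dist a c ≤ α * dist a b + (1 - α) * dist b c := by
  have hbc := dist_nonneg (x := b) (y := c)
  rcases le_total 0 α with hα0 | hα0
  · have hac := mul_le_mul_of_nonneg_left (dist_triangle a b c) hα0
    have hbc' := mul_le_mul_of_nonneg_right (by linarith : α ≤ 1 - α) hbc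
    linarith
  · have hac := mul_le_mul_of_nonpos_left (dist_triangle_right a b c) hα0
    linarith

theorem stmt_2_general {U : Type*} [MetricSpace U] {ι : Type*} [DecidableEq ι]
    (Z : Set U) (s : ι → U) (aggr : ι → (ι → U) → U) (α : ℝ)
    (hα : α ≤ 1/2)
    (hunanimity : ∀ i (z : ι → U) (x : U), (∀ j, j ≠ i → z j = x) → aggr i z = x)
    (z : U) :
    ∀ i, ∀ y ∈ Z,
      prefCost α s aggr i (fun _ => z)
        ≤ prefCost α s aggr i (Function.update (fun _ => z) i y) := by
  intro i y _
  have hconsensus : aggr i (fun _ => z) = z := hunanimity i _ z fun _ _ => rfl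
  have hdeviation : aggr i (Function.update (fun _ => z) i y) = z :=
    hunanimity i _ z fun _ hj => Function.update_of_ne hj _ _
  simp only [prefCost, hconsensus, hdeviation, Function.update_self, dist_self, mul_zero,
    add_zero]
  exact mul_dist_le_mul_dist_add_one_sub_mul_dist hα (s i) y z

/-- if `α ≤ 1/2` and the aggregation satisfies unanimity, any consensus
state is a pure Nash equilibrium. -/
theorem stmt_2 {U : Type*} [MetricSpace U] {ι : Type*} [DecidableEq ι]
    (Z : Set U) (s : ι → U) (aggr : ι → (ι → U) → U) (α : ℝ)
    (hα0 : 0 ≤ α) (hα : α ≤ 1/2)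
    (haggrZ : ∀ i x, aggr i x ∈ Z)
    (hunanimity : ∀ i (z : ι → U) (x : U), (∀ j, j ≠ i → z j = x) → aggr i z = x)
    (z : U) (hz : z ∈ Z) :
    ∀ i, ∀ y ∈ Z,
      prefCost α s aggr i (fun _ => z)
        ≤ prefCost α s aggr i (Function.update (fun _ => z) i y) :=
  stmt_2_general Z s aggr α hα hunanimity z
end

section
/- In an unrestricted preference game with local aggregation (all preferred strategies s_i ∈ Z) with metric d: if α ≥ 1/2 then the state e with e(i) = s_i for all i is a pure Nash equilibrium; and if α > 1/2 then a state e is a pure Nash equilibrium if and only if e(i) = s_i for all agents i. -/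
/-- A state `e` (with strategies in `Z`) is a pure Nash equilibrium. -/
def IsPNE {U : Type*} [MetricSpace U] {ι : Type*} [DecidableEq ι] (Z : Set U)
    (s : ι → U) (aggr : ι → (ι → U) → U) (α : ℝ) (e : ι → U) : Prop :=
  ∀ i, ∀ y ∈ Z, prefCost α s aggr i e ≤ prefCost α s aggr i (Function.update e i y)

section WeightedTriangle

variable {U : Type*} {α : ℝ}

lemma mul_dist_le_mul_dist_add_mul_dist [PseudoMetricSpace U] (hα : 1 / 2 ≤ α) (hα1 : α ≤ 1)
    (x y a : U) : (1 - α) * dist x a ≤ α * dist x y + (1 - α) * dist y a :=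
  calc (1 - α) * dist x a ≤ (1 - α) * (dist x y + dist y a) :=
        mul_le_mul_of_nonneg_left (dist_triangle x y a) (by linarith)
    _ ≤ α * dist x y + (1 - α) * dist y a := by nlinarith [dist_nonneg (x := x) (y := y)]

lemma eq_of_mul_dist_add_mul_dist_le [MetricSpace U] (hα : 1 / 2 < α) (hα1 : α ≤ 1)
    {x y a : U} (h : α * dist x y + (1 - α) * dist y a ≤ (1 - α) * dist x a) : x = y := by
  have htri : (1 - α) * dist x a ≤ (1 - α) * (dist x y + dist y a) :=
    mul_le_mul_of_nonneg_left (dist_triangle x y a) (by linarith)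
  have hxy : dist x y ≤ 0 := by nlinarith [dist_nonneg (x := x) (y := y)]
  exact dist_le_zero.mp hxy

end WeightedTriangle

section PreferenceGame

variable {U : Type*} [MetricSpace U] {ι : Type*} [DecidableEq ι]
  {s : ι → U} {aggr : ι → (ι → U) → U} {α : ℝ}

lemma prefCost_update_self {i : ι}
    (hindep : ∀ x y : ι → U, (∀ j, j ≠ i → x j = y j) → aggr i x = aggr i y)
    (e : ι → U) (y : U) :
    prefCost α s aggr i (Function.update e i y) =
      α * dist (s i) y + (1 - α) * dist y (aggr i e) := by
  rw [prefCost, Function.update_self,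
    hindep _ e fun j hj => Function.update_of_ne hj y e]

variable (hindep : ∀ i (x y : ι → U), (∀ j, j ≠ i → x j = y j) → aggr i x = aggr i y)
include hindep

lemma isPNE_preferred (Z : Set U) (hα : 1 / 2 ≤ α) (hα1 : α ≤ 1) : IsPNE Z s aggr α s := by
  intro i y _
  rw [prefCost_update_self (hindep i), prefCost, dist_self, mul_zero, zero_add]
  exact mul_dist_le_mul_dist_add_mul_dist hα hα1 _ _ _

lemma IsPNE.eq_preferred {Z : Set U} {e : ι → U} (hunrestricted : ∀ i, s i ∈ Z)
    (hα : 1 / 2 < α) (hα1 : α ≤ 1) (he : IsPNE Z s aggr α e) : e = s := by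
  funext i
  have hdev := he i (s i) (hunrestricted i)
  rw [prefCost_update_self (hindep i), prefCost, dist_self, mul_zero, zero_add] at hdev
  exact (eq_of_mul_dist_add_mul_dist_le hα hα1 hdev).symm

end PreferenceGame

theorem stmt_3_general {U : Type*} [MetricSpace U] {ι : Type*} [DecidableEq ι]
    (Z : Set U) (s : ι → U) (aggr : ι → (ι → U) → U) (α : ℝ)
    (hα1 : α ≤ 1)
    (hindep : ∀ i (x y : ι → U), (∀ j, j ≠ i → x j = y j) → aggr i x = aggr i y)
    (hunrestricted : ∀ i, s i ∈ Z) :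
    (1/2 ≤ α → IsPNE Z s aggr α s) ∧
    (1/2 < α → ∀ e : ι → U, (∀ i, e i ∈ Z) →
      (IsPNE Z s aggr α e ↔ ∀ i, e i = s i)) := by
  refine ⟨fun hα => isPNE_preferred hindep Z hα hα1, fun hα e _ => ⟨fun he => ?_, fun he => ?_⟩⟩
  · exact congrFun (he.eq_preferred hindep hunrestricted hα hα1)
  · rw [funext he]
    exact isPNE_preferred hindep Z hα.le hα1

/-- in an unrestricted game, if `α ≥ 1/2` then the profile of preferred
strategies is an equilibrium; if `α > 1/2`, a state is an equilibrium iff every agent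
plays her preferred strategy. -/
theorem stmt_3 {U : Type*} [MetricSpace U] {ι : Type*} [DecidableEq ι]
    (Z : Set U) (s : ι → U) (aggr : ι → (ι → U) → U) (α : ℝ)
    (hα1 : α ≤ 1)
    (haggrZ : ∀ i x, aggr i x ∈ Z)
    (hindep : ∀ i (x y : ι → U), (∀ j, j ≠ i → x j = y j) → aggr i x = aggr i y)
    (hunrestricted : ∀ i, s i ∈ Z) :
    (1/2 ≤ α → IsPNE Z s aggr α s) ∧
    (1/2 < α → ∀ e : ι → U, (∀ i, e i ∈ Z) →
      (IsPNE Z s aggr α e ↔ ∀ i, e i = s i)) :=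
  stmt_3_general Z s aggr α hα1 hindep hunrestricted
end

section
/- In a preference game with local aggregation with α > 1/2: for every pure Nash equilibrium e and optimal state o with respect to the maximum cost MAX(z) = max_i c_i(z), MAX(e) ≤ MAX(o)·(1 + ((1−α)/α)·(τ/β)), where τ is the global stretch and β the global boundary (assuming MAX(o) > 0). -/
/-! Deviating from `e` to `o i` costs agent `i` at most `c_i(o) + (1 - α) d(aggr_i o, aggr_i e)`,
by the triangle inequality through `aggr_i o`. The stretch bounds that distance by `τ` times a
sub-convex combination of the `d(o j, e j)`, and the boundary together with
`α d(s_j, o_j) ≤ c_j(o) ≤ MAX(o)` bounds each `d(o j, e j)` by `MAX(o) / (α β)`. -/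

open Finset

theorem dist_le_div_of_boundary {U : Type*} [MetricSpace U] {x y s : U} {β : ℝ} (hβ0 : 0 < β)
    (hβ : x ≠ y → β * dist x y ≤ dist x s) : dist x y ≤ dist x s / β := by
  rw [le_div_iff₀ hβ0, mul_comm]
  by_cases hxy : x = y
  · simp [hxy]
  · exact hβ hxy

theorem sum_mul_le_of_sum_le_one {ι : Type*} {t : Finset ι} {w f : ι → ℝ} {C : ℝ}
    (hw0 : ∀ j ∈ t, 0 ≤ w j) (hw1 : ∑ j ∈ t, w j ≤ 1) (hf : ∀ j ∈ t, f j ≤ C) (hC : 0 ≤ C) :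
    ∑ j ∈ t, w j * f j ≤ C :=
  calc ∑ j ∈ t, w j * f j ≤ ∑ j ∈ t, w j * C :=
        sum_le_sum fun j hj => mul_le_mul_of_nonneg_left (hf j hj) (hw0 j hj)
    _ = (∑ j ∈ t, w j) * C := (sum_mul ..).symm
    _ ≤ C := mul_le_of_le_one_left hC hw1

section prefCost

variable {U : Type*} [MetricSpace U] {ι : Type*} {α : ℝ} {s : ι → U} {aggr : ι → (ι → U) → U}

theorem mul_dist_le_prefCost (hα1 : α ≤ 1) (i : ι) (z : ι → U) :
    α * dist (s i) (z i) ≤ prefCost α s aggr i z := by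
  unfold prefCost
  have : 0 ≤ (1 - α) * dist (z i) (aggr i z) := mul_nonneg (by linarith) dist_nonneg
  linarith

theorem prefCost_update_le [DecidableEq ι] (hα1 : α ≤ 1) {i : ι}
    (hindep : ∀ x y : ι → U, (∀ j, j ≠ i → x j = y j) → aggr i x = aggr i y) (x z : ι → U) :
    prefCost α s aggr i (Function.update z i (x i))
      ≤ prefCost α s aggr i x + (1 - α) * dist (aggr i x) (aggr i z) := by
  have haggr : aggr i (Function.update z i (x i)) = aggr i z :=
    hindep _ _ fun j hj => Function.update_of_ne hj _ _
  have htri := dist_triangle (x i) (aggr i x) (aggr i z)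
  have h1α : 0 ≤ 1 - α := by linarith
  simp only [prefCost, Function.update_self, haggr]
  nlinarith

end prefCost

theorem stmt_8_general {U : Type*} [MetricSpace U] {ι : Type*} [Fintype ι] [DecidableEq ι]
    [Nonempty ι]
    (Z : Set U) (s : ι → U) (aggr : ι → (ι → U) → U) (w : ι → ι → ℝ)
    (α τ β : ℝ) (hα : 1/2 < α) (hα1 : α ≤ 1)
    (hindep : ∀ i (x y : ι → U), (∀ j, j ≠ i → x j = y j) → aggr i x = aggr i y)
    (hw0 : ∀ i j, 0 ≤ w i j) (hw1 : ∀ i, ∑ j, w i j = 1)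
    (e o : ι → U) (hoZ : ∀ i, o i ∈ Z)
    -- `e` is a pure Nash equilibrium
    (heq : ∀ i, ∀ y ∈ Z, prefCost α s aggr i e ≤ prefCost α s aggr i (Function.update e i y))
    -- `τ` is the global stretch
    (hτ1 : 1 ≤ τ)
    (hτ : ∀ i, dist (aggr i o) (aggr i e)
        ≤ τ * ∑ j ∈ Finset.univ.erase i, w i j * dist (o j) (e j))
    -- `β` is the global boundary
    (hβ0 : 0 < β)
    (hβ : ∀ i, ∀ x ∈ Z, x ≠ e i → β * dist x (e i) ≤ dist x (s i)) :
    Finset.univ.sup' Finset.univ_nonempty (fun i => prefCost α s aggr i e)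
      ≤ (Finset.univ.sup' Finset.univ_nonempty (fun i => prefCost α s aggr i o))
          * (1 + ((1 - α)/α) * (τ / β)) := by
  set M := univ.sup' univ_nonempty fun i => prefCost α s aggr i o
  have hα0 : 0 < α := by linarith
  have hcost : ∀ i, prefCost α s aggr i o ≤ M := fun i =>
    le_sup' (fun j => prefCost α s aggr j o) (mem_univ i)
  have hM0 : 0 ≤ M := (mul_nonneg hα0.le dist_nonneg).trans
    ((mul_dist_le_prefCost hα1 _ o).trans (hcost (Classical.arbitrary ι)))
  have hdist : ∀ j, dist (o j) (e j) ≤ M / (α * β) := fun j =>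
    calc dist (o j) (e j) ≤ dist (s j) (o j) / β := by
          rw [dist_comm (s j)]; exact dist_le_div_of_boundary hβ0 (hβ j _ (hoZ j))
      _ ≤ M / α / β := by
          gcongr
          rw [le_div_iff₀ hα0, mul_comm]
          exact (mul_dist_le_prefCost hα1 j o).trans (hcost j)
      _ = M / (α * β) := div_div ..
  have hweights : ∀ i, ∑ j ∈ univ.erase i, w i j ≤ 1 := fun i =>
    hw1 i ▸ sum_le_sum_of_subset_of_nonneg (erase_subset _ _) fun j _ _ => hw0 i j
  have hstretch : ∀ i, dist (aggr i o) (aggr i e) ≤ τ * (M / (α * β)) := fun i =>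
    (hτ i).trans <| mul_le_mul_of_nonneg_left
      (sum_mul_le_of_sum_le_one (fun j _ => hw0 i j) (hweights i) (fun j _ => hdist j)
        (by positivity))
      (by linarith)
  refine sup'_le _ _ fun i _ => ?_
  have h1α : 0 ≤ 1 - α := by linarith
  calc prefCost α s aggr i e ≤ prefCost α s aggr i (Function.update e i (o i)) :=
        heq i (o i) (hoZ i)
    _ ≤ prefCost α s aggr i o + (1 - α) * dist (aggr i o) (aggr i e) :=
        prefCost_update_le hα1 (hindep i) o e
    _ ≤ M + (1 - α) * (τ * (M / (α * β))) := by gcongr; exacts [hcost i, hstretch i]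
    _ = M * (1 + ((1 - α) / α) * (τ / β)) := by field_simp

/-- if `α > 1/2`, then for every equilibrium `e` and optimal state `o`
(wrt. maximum cost MAX), `MAX(e) ≤ MAX(o) (1 + ((1-α)/α)(τ/β))`. -/
theorem stmt_8 {U : Type*} [MetricSpace U] {ι : Type*} [Fintype ι] [DecidableEq ι]
    [Nonempty ι]
    (Z : Set U) (s : ι → U) (aggr : ι → (ι → U) → U) (w : ι → ι → ℝ)
    (α τ β : ℝ) (hα : 1/2 < α) (hα1 : α ≤ 1)
    (haggrZ : ∀ i x, aggr i x ∈ Z)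
    (hindep : ∀ i (x y : ι → U), (∀ j, j ≠ i → x j = y j) → aggr i x = aggr i y)
    (hw0 : ∀ i j, 0 ≤ w i j) (hwii : ∀ i, w i i = 0) (hw1 : ∀ i, ∑ j, w i j = 1)
    (e o : ι → U) (heZ : ∀ i, e i ∈ Z) (hoZ : ∀ i, o i ∈ Z)
    -- `e` is a pure Nash equilibrium
    (heq : ∀ i, ∀ y ∈ Z, prefCost α s aggr i e ≤ prefCost α s aggr i (Function.update e i y))
    -- `o` is optimal wrt. MAX
    (hopt : ∀ z : ι → U, (∀ i, z i ∈ Z) →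
      Finset.univ.sup' Finset.univ_nonempty (fun i => prefCost α s aggr i o)
        ≤ Finset.univ.sup' Finset.univ_nonempty (fun i => prefCost α s aggr i z))
    -- `τ` is the global stretch
    (hτ1 : 1 ≤ τ)
    (hτ : ∀ i, dist (aggr i o) (aggr i e)
        ≤ τ * ∑ j ∈ Finset.univ.erase i, w i j * dist (o j) (e j))
    -- `β` is the global boundary
    (hβ0 : 0 < β)
    (hβ : ∀ i, ∀ x ∈ Z, x ≠ e i → β * dist x (e i) ≤ dist x (s i))
    (hMAXo : 0 < Finset.univ.sup' Finset.univ_nonempty (fun i => prefCost α s aggr i o)) :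
    Finset.univ.sup' Finset.univ_nonempty (fun i => prefCost α s aggr i e)
      ≤ (Finset.univ.sup' Finset.univ_nonempty (fun i => prefCost α s aggr i o))
          * (1 + ((1 - α)/α) * (τ / β)) :=
  stmt_8_general Z s aggr w α τ β hα hα1 hindep hw0 hw1 e o hoZ heq hτ1 hτ hβ0 hβ
end
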